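/- arXiv:2605.27529 — 3 statements merged into one kernel-verified Lean document; each statement's English description precedes it below -/
import Mathlib

section
/- Suppose V : ℝ³ → ℝ is measurable, locally square-integrable, and V(x) → 0 as |x| → ∞. Define L[n] := (1/2)∫ (−V(x)) n(x) dx for real-valued n. Then for every ε > 0 there exists a constant C_ε ≥ 0 such that for all measurable n₁, n₂ : ℝ³ → ℝ belonging to L¹(ℝ³) ∩ L²(ℝ³), the integrals defining L[n₁] and L[n₂] converge absolutely and |L[n₂] − L[n₁]| ≤ C_ε ‖n₂ − n₁‖₂ + ε ‖n₂ − n₁‖₁. -/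
noncomputable section
open MeasureTheory Filter Real
open scoped Topology ENNReal

abbrev E3 : Type := EuclideanSpace ℝ (Fin 3)
abbrev Cd (m : ℕ) : Type := EuclideanSpace ℂ (Fin m)

/-- Squared pointwise (Frobenius) norm of the gradient of `u`. -/
def gradSq {m : ℕ} (u : E3 → Cd m) (x : E3) : ℝ :=
  ∑ i : Fin 3, ‖fderiv ℝ u x (EuclideanSpace.single i (1 : ℝ))‖ ^ 2

/-- `u ∈ H¹(ℝ³, ℂ^m)`: differentiable with `u` and `∇u` square integrable. -/
def MemH1 {m : ℕ} (u : E3 → Cd m) : Prop :=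
  Differentiable ℝ u ∧ Integrable (fun x => ‖u x‖ ^ 2) ∧ Integrable (gradSq u)

/-- The `H¹` norm, `‖u‖_{H¹}² = ‖u‖₂² + ‖∇u‖₂²`. -/
def H1norm {m : ℕ} (u : E3 → Cd m) : ℝ :=
  Real.sqrt ((∫ x, ‖u x‖ ^ 2) + ∫ x, gradSq u x)

/-- Kinetic energy `T[u] = (1/2) ∫ |∇u|²`. -/
def Tkin {m : ℕ} (u : E3 → Cd m) : ℝ := (1 / 2) * ∫ x, gradSq u x

/-- `L[n] = (1/2) ∫ (−V(x)) n(x) dx`. -/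
def Lpot (V : E3 → ℝ) (n : E3 → ℝ) : ℝ := (1 / 2) * ∫ x, (-(V x)) * n x

/-- Newtonian interaction energy `D[n] = (1/16π) ∬ n(x)n(y)/|x−y| dx dy`. -/
def Dint (n : E3 → ℝ) : ℝ :=
  (1 / (16 * Real.pi)) * ∫ x, ∫ y, n x * n y / dist x y

/-- Energy functional `𝓔[u] = T[u] − L[|u|²] − D[|u|²]`. -/
def Energy {m : ℕ} (V : E3 → ℝ) (u : E3 → Cd m) : ℝ :=
  Tkin u - Lpot V (fun x => ‖u x‖ ^ 2) - Dint (fun x => ‖u x‖ ^ 2)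

/-- Condition (i): `V` is measurable, locally square integrable, and `V(x) → 0` as `|x| → ∞`. -/
def CondI (V : E3 → ℝ) : Prop :=
  Measurable V ∧ LocallyIntegrable (fun x => (V x) ^ 2) volume ∧
    Tendsto V (cocompact E3) (𝓝 0)


/-- Under condition (i) on `V`, for every `ε > 0` there is `C_ε ≥ 0` such
that for all `n₁, n₂ ∈ L¹ ∩ L²`, the integrals defining `L[nᵢ]` converge absolutely and
`|L[n₂] − L[n₁]| ≤ C_ε ‖n₂ − n₁‖₂ + ε ‖n₂ − n₁‖₁`. -/
theorem Lpot_estimate (V : E3 → ℝ) (hV : CondI V) :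
    ∀ ε > (0 : ℝ), ∃ Cε ≥ (0 : ℝ), ∀ n₁ n₂ : E3 → ℝ,
      Measurable n₁ → Measurable n₂ →
      Integrable n₁ → Integrable (fun x => (n₁ x) ^ 2) →
      Integrable n₂ → Integrable (fun x => (n₂ x) ^ 2) →
      Integrable (fun x => V x * n₁ x) ∧ Integrable (fun x => V x * n₂ x) ∧
      |Lpot V n₂ - Lpot V n₁| ≤
        Cε * (∫ x, (n₂ x - n₁ x) ^ 2) ^ ((1 : ℝ) / 2) + ε * ∫ x, |n₂ x - n₁ x| := by
  obtain ⟨hVmeas, hVloc, hVtend⟩ := hV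
  intro ε hε
  obtain ⟨K, hK, hKsub⟩ := Filter.mem_cocompact.mp (hVtend (Metric.ball_mem_nhds (0:ℝ) hε))
  have hVsmall : ∀ x, x ∉ K → |V x| ≤ ε := by
    intro x hx
    have := hKsub hx
    simp only [Set.mem_preimage, Metric.mem_ball, Real.dist_eq, sub_zero] at this
    exact this.le
  have hKm : MeasurableSet K := hK.isClosed.measurableSet
  have hVK : IntegrableOn (fun x => (V x)^2) K := hVloc.integrableOn_isCompact hK
  set C : ℝ := (∫ x in K, (V x)^2) ^ ((1:ℝ)/2) with hCdef
  have hC : 0 ≤ C := Real.rpow_nonneg (integral_nonneg fun x => sq_nonneg _) _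
  refine ⟨C, hC, ?_⟩
  intro n₁ n₂ hm1 hm2 hi1 hs1 hi2 hs2
  have key : ∀ (n : E3 → ℝ), Measurable n → Integrable n →
      Integrable (fun x => (n x)^2) → Integrable (fun x => V x * n x) := by
    intro n hn hni hns
    have hmeas : AEStronglyMeasurable (fun x => V x * n x) volume :=
      (hVmeas.mul hn).aestronglyMeasurable
    have hKpart : IntegrableOn (fun x => V x * n x) K := by
      refine Integrable.mono' (hVK.add hns.integrableOn) hmeas.restrict ?_
      refine Filter.Eventually.of_forall fun x => ?_
      have h := sq_nonneg (|V x| - |n x|)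
      have : ‖V x * n x‖ = |V x| * |n x| := by rw [Real.norm_eq_abs, abs_mul]
      rw [this]
      simp only [Pi.add_apply]
      nlinarith [sq_abs (V x), sq_abs (n x)]
    have hKc : IntegrableOn (fun x => V x * n x) Kᶜ := by
      refine Integrable.mono' ((hni.norm.const_mul ε).integrableOn) hmeas.restrict ?_
      rw [ae_restrict_iff' hKm.compl]
      refine Filter.Eventually.of_forall fun x hx => ?_
      have h1 : |V x| ≤ ε := hVsmall x hx
      have : ‖V x * n x‖ = |V x| * |n x| := by rw [Real.norm_eq_abs, abs_mul]
      rw [this]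
      exact mul_le_mul_of_nonneg_right h1 (abs_nonneg _)
    have h := hKpart.union hKc
    rwa [Set.union_compl_self, integrableOn_univ] at h
  have hI1 := key n₁ hm1 hi1 hs1
  have hI2 := key n₂ hm2 hi2 hs2
  refine ⟨hI1, hI2, ?_⟩
  set m : E3 → ℝ := fun x => n₂ x - n₁ x with hmdef
  have hmm : Measurable m := hm2.sub hm1
  have hmi : Integrable m := hi2.sub hi1
  have hms : Integrable (fun x => (m x)^2) := by
    refine Integrable.mono' ((hs2.const_mul 2).add (hs1.const_mul 2))
      ((hmm.pow_const 2).aestronglyMeasurable) ?_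
    refine Filter.Eventually.of_forall fun x => ?_
    have : ‖(m x)^2‖ = (m x)^2 := by
      rw [Real.norm_eq_abs, abs_of_nonneg (sq_nonneg _)]
    rw [this]
    simp only [Pi.add_apply, hmdef]
    nlinarith [sq_nonneg (n₂ x + n₁ x)]
  have hIVm : Integrable (fun x => V x * m x) := key m hmm hmi hms
  -- rewrite the difference of Lpot
  have hdiff : Lpot V n₂ - Lpot V n₁ = (1/2) * ∫ x, (-(V x)) * m x := by
    have e1 : Integrable (fun x => (-(V x)) * n₂ x) :=
      hI2.neg.congr (Filter.Eventually.of_forall fun x => by simp only [Pi.neg_apply]; ring)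
    have e2 : Integrable (fun x => (-(V x)) * n₁ x) :=
      hI1.neg.congr (Filter.Eventually.of_forall fun x => by simp only [Pi.neg_apply]; ring)
    rw [Lpot, Lpot, ← mul_sub, ← integral_sub e1 e2]
    congr 1
    apply integral_congr_ae
    refine Filter.Eventually.of_forall fun x => ?_
    simp only [hmdef]
    ring
  -- the absolute value bound
  have habs : |∫ x, (-(V x)) * m x| ≤ ∫ x, |V x * m x| := by
    have h1 := norm_integral_le_integral_norm (μ := volume) (f := fun x => (-(V x)) * m x)
    simp only [Real.norm_eq_abs] at h1
    have h2 : (∫ x, |(-(V x)) * m x|) = ∫ x, |V x * m x| := by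
      apply integral_congr_ae
      refine Filter.Eventually.of_forall fun x => ?_
      show |(-(V x)) * m x| = |V x * m x|
      rw [show (-(V x)) * m x = -(V x * m x) by ring, abs_neg]
    rwa [h2] at h1
  -- split the integral of |V m|
  have hsplit : (∫ x, |V x * m x|) =
      (∫ x in K, |V x * m x|) + ∫ x in Kᶜ, |V x * m x| := by
    rw [integral_add_compl hKm hIVm.abs]
  -- Cauchy-Schwarz on K
  have hpq : Real.HolderConjugate 2 2 := Real.holderConjugate_iff.mpr ⟨one_lt_two, by norm_num⟩
  have hmsK : IntegrableOn (fun x => (m x)^2) K := hms.integrableOn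
  have hVL2 : MemLp (fun x => |V x|) (ENNReal.ofReal 2) (volume.restrict K) := by
    rw [show ENNReal.ofReal 2 = 2 by norm_num]
    rw [memLp_two_iff_integrable_sq ((hVmeas.abs).aestronglyMeasurable)]
    exact hVK.congr_fun (fun x _ => (sq_abs (V x)).symm) hKm
  have hmL2 : MemLp (fun x => |m x|) (ENNReal.ofReal 2) (volume.restrict K) := by
    rw [show ENNReal.ofReal 2 = 2 by norm_num]
    rw [memLp_two_iff_integrable_sq ((hmm.abs).aestronglyMeasurable)]
    exact hmsK.congr_fun (fun x _ => (sq_abs (m x)).symm) hKm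
  have hCS : (∫ x in K, |V x * m x|) ≤
      (∫ x in K, |V x| ^ (2:ℝ)) ^ ((1:ℝ)/2) * (∫ x in K, |m x| ^ (2:ℝ)) ^ ((1:ℝ)/2) := by
    have h := integral_mul_le_Lp_mul_Lq_of_nonneg (μ := volume.restrict K) hpq
      (Filter.Eventually.of_forall fun x => abs_nonneg (V x))
      (Filter.Eventually.of_forall fun x => abs_nonneg (m x)) hVL2 hmL2
    calc (∫ x in K, |V x * m x|) = ∫ x in K, |V x| * |m x| := by
          apply integral_congr_ae
          exact Filter.Eventually.of_forall fun x => abs_mul _ _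
      _ ≤ _ := h
  have hrw1 : (∫ x in K, |V x| ^ (2:ℝ)) = ∫ x in K, (V x)^2 := by
    apply integral_congr_ae
    refine Filter.Eventually.of_forall fun x => ?_
    show |V x| ^ (2:ℝ) = V x ^ 2
    rw [show ((2:ℝ)) = ((2:ℕ):ℝ) by norm_num, Real.rpow_natCast, sq_abs]
  have hrw2 : (∫ x in K, |m x| ^ (2:ℝ)) = ∫ x in K, (m x)^2 := by
    apply integral_congr_ae
    refine Filter.Eventually.of_forall fun x => ?_
    show |m x| ^ (2:ℝ) = m x ^ 2
    rw [show ((2:ℝ)) = ((2:ℕ):ℝ) by norm_num, Real.rpow_natCast, sq_abs]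
  have hKle : (∫ x in K, (m x)^2) ≤ ∫ x, (m x)^2 :=
    setIntegral_le_integral hms (Filter.Eventually.of_forall fun x => sq_nonneg _)
  have hterm1 : (∫ x in K, |V x * m x|) ≤ C * (∫ x, (m x)^2) ^ ((1:ℝ)/2) := by
    refine hCS.trans ?_
    rw [hrw1, hrw2, hCdef]
    refine mul_le_mul_of_nonneg_left ?_ (Real.rpow_nonneg (integral_nonneg fun x => sq_nonneg _) _)
    exact Real.rpow_le_rpow (integral_nonneg fun x => sq_nonneg _) hKle (by norm_num)
  -- bound on Kᶜ
  have hterm2 : (∫ x in Kᶜ, |V x * m x|) ≤ ε * ∫ x, |m x| := by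
    have h1 : (∫ x in Kᶜ, |V x * m x|) ≤ ∫ x in Kᶜ, ε * |m x| := by
      refine setIntegral_mono_on hIVm.abs.integrableOn
        ((hmi.abs.const_mul ε).integrableOn) hKm.compl fun x hx => ?_
      rw [abs_mul]
      exact mul_le_mul_of_nonneg_right (hVsmall x hx) (abs_nonneg _)
    have h2 : (∫ x in Kᶜ, ε * |m x|) = ε * ∫ x in Kᶜ, |m x| := by
      rw [integral_const_mul]
    have h3 : (∫ x in Kᶜ, |m x|) ≤ ∫ x, |m x| :=
      setIntegral_le_integral hmi.abs (Filter.Eventually.of_forall fun x => abs_nonneg _)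
    calc (∫ x in Kᶜ, |V x * m x|) ≤ ε * ∫ x in Kᶜ, |m x| := by rw [← h2]; exact h1
      _ ≤ ε * ∫ x, |m x| := mul_le_mul_of_nonneg_left h3 hε.le
  -- combine
  have hA : (0:ℝ) ≤ ∫ x in K, |V x * m x| := integral_nonneg fun x => abs_nonneg _
  have hB : (0:ℝ) ≤ ∫ x in Kᶜ, |V x * m x| := integral_nonneg fun x => abs_nonneg _
  rw [hdiff, abs_mul]
  have h12 : |(1:ℝ)/2| = 1/2 := by norm_num
  rw [h12]
  calc (1/2) * |∫ x, (-(V x)) * m x| ≤ (1/2) * ((∫ x in K, |V x * m x|) + ∫ x in Kᶜ, |V x * m x|) := by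
        rw [← hsplit]
        exact mul_le_mul_of_nonneg_left habs (by norm_num)
    _ ≤ (∫ x in K, |V x * m x|) + ∫ x in Kᶜ, |V x * m x| := by linarith
    _ ≤ C * (∫ x, (m x)^2) ^ ((1:ℝ)/2) + ε * ∫ x, |m x| := add_le_add hterm1 hterm2
end
end

section
/- There exists a universal constant C > 0 such that for every u : ℝ³ → ℂ^m in H¹(ℝ³,ℂ^m), writing n = |u|², N = ‖u‖₂², and T[u] = (1/2)∫ |∇u|² dx, the interaction energy D[n] = (1/16π)∬ n(x) n(y)/|x−y| dx dy is finite and satisfies D[n] ≤ (1/4) T[u] + C N³. In particular D[n] ≤ C' N^{3/2} T[u]^{1/2} for a universal constant C'. -/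
noncomputable section
open MeasureTheory Filter Real
open scoped Topology ENNReal

/-!
Hardy's inequality `∫ |u|² / |x - z|² ≤ 4 ∫ |∇u|²` follows, ray by ray in polar coordinates
centred at `z`, from its one-dimensional form `∫₀^∞ |v|² ≤ 4 ∫₀^∞ r² |v'|²`, which is integration
by parts of `(r |v|²)' = |v|² + 2 r ⟪v, v'⟫` followed by AM-GM. By Cauchy–Schwarz the Coulomb
potential of `n = |u|²` is then bounded at every point, `∫ n(y) / |x - y| dy ≤ 2 ‖u‖₂ ‖∇u‖₂`.
Integrating against `n` gives `D[n] ≤ N^{3/2} T^{1/2}`, and `a b ≤ b² / 4 + a²` turns this into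
`D[n] ≤ T / 4 + N³`.
-/

open Set Metric
open scoped RealInnerProductSpace

lemma norm_apply_sq_le_norm_sq_mul_sum_norm_apply_single_sq {ι F : Type*} [Fintype ι]
    [DecidableEq ι] [SeminormedAddCommGroup F] [NormedSpace ℝ F] (L : EuclideanSpace ℝ ι →L[ℝ] F)
    (ω : EuclideanSpace ℝ ι) :
    ‖L ω‖ ^ 2 ≤ ‖ω‖ ^ 2 * ∑ i, ‖L (EuclideanSpace.single i 1)‖ ^ 2 := by
  have hL : L ω = ∑ i, ω i • L (EuclideanSpace.single i 1) := by
    conv_lhs => rw [← (EuclideanSpace.basisFun ι ℝ).sum_repr ω]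
    simp
  calc ‖L ω‖ ^ 2 ≤ (∑ i, ‖ω i‖ * ‖L (EuclideanSpace.single i 1)‖) ^ 2 := by
        gcongr
        rw [hL]
        exact (norm_sum_le _ _).trans_eq (by simp only [norm_smul])
    _ ≤ (∑ i, ‖ω i‖ ^ 2) * ∑ i, ‖L (EuclideanSpace.single i 1)‖ ^ 2 :=
        Finset.sum_mul_sq_le_sq_mul_sq _ _ _
    _ = _ := by rw [EuclideanSpace.norm_sq_eq]

theorem lintegral_eq_lintegral_toSphere_lintegral_Ioi {E : Type*} [NormedAddCommGroup E]
    [NormedSpace ℝ E] [FiniteDimensional ℝ E] [Nontrivial E] [MeasurableSpace E] [BorelSpace E]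
    (μ : Measure E) [μ.IsAddHaarMeasure] {F : E → ℝ≥0∞} (hF : Measurable F) (z : E) :
    ∫⁻ x, F x ∂μ = ∫⁻ ω : sphere (0 : E) 1, ∫⁻ r in Ioi (0 : ℝ),
      ENNReal.ofReal (r ^ (Module.finrank ℝ E - 1)) * F (z + r • (ω : E)) ∂volume
        ∂μ.toSphere := by
  set f : sphere (0 : E) 1 × Ioi (0 : ℝ) → ℝ≥0∞ := fun p => F (z + p.2.1 • p.1.1)
  have hf : Measurable f := hF.comp <| (continuous_const.add <|
    (continuous_subtype_val.comp continuous_snd).smul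
      (continuous_subtype_val.comp continuous_fst)).measurable
  calc ∫⁻ x, F x ∂μ = ∫⁻ x, F (z + x) ∂μ := (lintegral_add_left_eq_self F z).symm
    _ = ∫⁻ x : ({0}ᶜ : Set E), F (z + x) ∂μ.comap Subtype.val := by
        rw [lintegral_subtype_comap (measurableSet_singleton 0).compl (fun x => F (z + x)),
          restrict_compl_singleton]
    _ = ∫⁻ p, f p ∂μ.toSphere.prod (Measure.volumeIoiPow (Module.finrank ℝ E - 1)) := by
        rw [← (μ.measurePreserving_homeomorphUnitSphereProd).lintegral_comp hf]
        refine lintegral_congr fun x => ?_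
        simp [f, smul_inv_smul₀ (norm_ne_zero_iff.2 x.2)]
    _ = _ := by
        rw [lintegral_prod f hf.aemeasurable]
        refine lintegral_congr fun ω => ?_
        have hfω : Measurable fun r : Ioi (0 : ℝ) => f (ω, r) := hf.comp measurable_prodMk_left
        rw [Measure.volumeIoiPow, lintegral_withDensity_eq_lintegral_mul _
          (measurable_subtype_coe.pow_const _).ennreal_ofReal hfω]
        exact lintegral_subtype_comap measurableSet_Ioi
          (fun r : ℝ => ENNReal.ofReal (r ^ _) * F (z + r • (ω : E)))

section Hardy

theorem frequently_atTop_lt_of_setLIntegral_Ioi_ne_top {g : ℝ → ℝ} {c : ℝ}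
    (hg : ∫⁻ r in Ioi c, ENNReal.ofReal (g r) ≠ ∞) {δ : ℝ} (hδ : 0 < δ) :
    ∃ᶠ r in atTop, g r < δ := by
  by_contra h
  obtain ⟨R, hR⟩ := eventually_atTop.1 (not_frequently.1 h)
  refine hg (eq_top_iff.2 ?_)
  calc ∞ = ∫⁻ _ in Ioi (max R c), ENNReal.ofReal δ := by
        rw [setLIntegral_const, Real.volume_Ioi, ENNReal.mul_top (ENNReal.ofReal_pos.2 hδ).ne']
    _ ≤ ∫⁻ r in Ioi (max R c), ENNReal.ofReal (g r) :=
        setLIntegral_mono' measurableSet_Ioi fun r hr =>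
          ENNReal.ofReal_le_ofReal (not_lt.1 (hR r (le_of_max_le_left (le_of_lt hr))))
    _ ≤ ∫⁻ r in Ioi c, ENNReal.ofReal (g r) :=
        lintegral_mono_set (Ioi_subset_Ioi (le_max_right _ _))

variable {F : Type*} [NormedAddCommGroup F] [InnerProductSpace ℝ F] {v v' : ℝ → F}

lemma abs_mul_two_inner_le (r : ℝ) (x y : F) :
    |r * (2 * ⟪x, y⟫)| ≤ (1 / 2) * ‖x‖ ^ 2 + 2 * (r ^ 2 * ‖y‖ ^ 2) := by
  have hxy := abs_real_inner_le_norm x y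
  rw [abs_mul, abs_mul, abs_two, ← sq_abs r]
  nlinarith [sq_nonneg (‖x‖ - 2 * (|r| * ‖y‖)), abs_nonneg r, abs_nonneg ⟪x, y⟫]

theorem lintegral_Ioc_norm_sq_le {a b : ℝ} (ha : 0 ≤ a) (hab : a ≤ b)
    (hv : ∀ r ∈ Icc a b, HasDerivAt v (v' r) r)
    (hv' : AEStronglyMeasurable v' (volume.restrict (Ioc a b)))
    (hint : IntegrableOn (fun r => r ^ 2 * ‖v' r‖ ^ 2) (Ioc a b)) :
    ∫⁻ r in Ioc a b, ENNReal.ofReal (‖v r‖ ^ 2) ≤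
      ENNReal.ofReal (2 * (b * ‖v b‖ ^ 2)) +
        4 * ∫⁻ r in Ioc a b, ENNReal.ofReal (r ^ 2 * ‖v' r‖ ^ 2) := by
  have hcont : ContinuousOn v (Icc a b) := fun r hr => (hv r hr).continuousAt.continuousWithinAt
  have hsq : IntegrableOn (fun r => ‖v r‖ ^ 2) (Ioc a b) :=
    ((hcont.norm.pow 2).integrableOn_compact isCompact_Icc).mono_set Ioc_subset_Icc_self
  have hbound :
      IntegrableOn (fun r => (1 / 2) * ‖v r‖ ^ 2 + 2 * (r ^ 2 * ‖v' r‖ ^ 2)) (Ioc a b) :=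
    (hsq.const_mul _).add (hint.const_mul _)
  have hcross : IntegrableOn (fun r => r * (2 * ⟪v r, v' r⟫)) (Ioc a b) := by
    refine hbound.mono' ?_ (Eventually.of_forall fun r => abs_mul_two_inner_le r _ _)
    exact aestronglyMeasurable_id.mul (aestronglyMeasurable_const.mul
      (((hcont.mono Ioc_subset_Icc_self).aestronglyMeasurable measurableSet_Ioc).inner hv'))
  have hFTC : ∫ r in Ioc a b, (‖v r‖ ^ 2 + r * (2 * ⟪v r, v' r⟫)) =
      b * ‖v b‖ ^ 2 - a * ‖v a‖ ^ 2 := by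
    rw [← intervalIntegral.integral_of_le hab]
    refine intervalIntegral.integral_eq_sub_of_hasDerivAt (f := fun r => r * ‖v r‖ ^ 2)
      (fun r hr => ?_) ((intervalIntegrable_iff_integrableOn_Ioc_of_le hab).2 (hsq.add hcross))
    rw [uIcc_of_le hab] at hr
    exact ((hasDerivAt_id' r).mul (hv r hr).norm_sq).congr_deriv (by ring)
  have hneg : -∫ r in Ioc a b, r * (2 * ⟪v r, v' r⟫) ≤
      ∫ r in Ioc a b, ((1 / 2) * ‖v r‖ ^ 2 + 2 * (r ^ 2 * ‖v' r‖ ^ 2)) := by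
    rw [← integral_neg]
    exact integral_mono hcross.neg hbound fun r =>
      (neg_le_abs _).trans (abs_mul_two_inner_le r _ _)
  rw [integral_add hsq hcross] at hFTC
  rw [integral_add (hsq.const_mul _) (hint.const_mul _), integral_const_mul,
    integral_const_mul] at hneg
  have hreal : ∫ r in Ioc a b, ‖v r‖ ^ 2 ≤
      2 * (b * ‖v b‖ ^ 2) + 4 * ∫ r in Ioc a b, r ^ 2 * ‖v' r‖ ^ 2 := by
    nlinarith [mul_nonneg ha (sq_nonneg ‖v a‖)]
  rw [← ofReal_integral_eq_lintegral_ofReal hsq (Eventually.of_forall fun r => by positivity),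
    ← ofReal_integral_eq_lintegral_ofReal hint (Eventually.of_forall fun r => by positivity),
    ← ENNReal.ofReal_ofNat 4, ← ENNReal.ofReal_mul (by norm_num)]
  exact (ENNReal.ofReal_le_ofReal hreal).trans ENNReal.ofReal_add_le

theorem lintegral_Ioc_norm_sq_le_of_integrableOn_Ioi
    (hv : ∀ r ∈ Ioi (0 : ℝ), HasDerivAt v (v' r) r)
    (hv' : AEStronglyMeasurable v' (volume.restrict (Ioi 0)))
    (hfin : ∫⁻ r in Ioi (0 : ℝ), ENNReal.ofReal (r ^ 2 * ‖v r‖ ^ 2) ≠ ∞)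
    (hint : IntegrableOn (fun r => r ^ 2 * ‖v' r‖ ^ 2) (Ioi 0)) {a : ℝ} (ha : 0 < a) (c : ℝ) :
    ∫⁻ r in Ioc a c, ENNReal.ofReal (‖v r‖ ^ 2) ≤
      4 * ∫⁻ r in Ioi (0 : ℝ), ENNReal.ofReal (r ^ 2 * ‖v' r‖ ^ 2) := by
  refine ENNReal.le_of_forall_pos_le_add fun ε hε _ => ?_
  -- the boundary term `b ‖v b‖²` is small along a sequence `b → ∞` since `∫ r² ‖v‖² < ∞`
  obtain ⟨b, hbε, hb, hb1⟩ := ((frequently_atTop_lt_of_setLIntegral_Ioi_ne_top hfin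
    (half_pos (NNReal.coe_pos.2 hε))).and_eventually
      ((eventually_ge_atTop (max a c)).and (eventually_ge_atTop 1))).exists
  have hsub : Ioc a b ⊆ Ioi 0 := fun r hr => ha.trans hr.1
  have hbound : 2 * (b * ‖v b‖ ^ 2) ≤ ε := by
    have : b * ‖v b‖ ^ 2 ≤ b ^ 2 * ‖v b‖ ^ 2 :=
      mul_le_mul_of_nonneg_right (by nlinarith) (sq_nonneg _)
    linarith
  calc ∫⁻ r in Ioc a c, ENNReal.ofReal (‖v r‖ ^ 2)
      ≤ ∫⁻ r in Ioc a b, ENNReal.ofReal (‖v r‖ ^ 2) :=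
        lintegral_mono_set (Ioc_subset_Ioc le_rfl ((le_max_right a c).trans hb))
    _ ≤ ENNReal.ofReal (2 * (b * ‖v b‖ ^ 2)) +
        4 * ∫⁻ r in Ioc a b, ENNReal.ofReal (r ^ 2 * ‖v' r‖ ^ 2) :=
        lintegral_Ioc_norm_sq_le ha.le ((le_max_left a c).trans hb)
          (fun r hr => hv r (ha.trans_le hr.1))
          (hv'.mono_measure (Measure.restrict_mono hsub le_rfl)) (hint.mono_set hsub)
    _ ≤ ε + 4 * ∫⁻ r in Ioi (0 : ℝ), ENNReal.ofReal (r ^ 2 * ‖v' r‖ ^ 2) := by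
        gcongr
        exact ENNReal.ofReal_le_of_le_toReal hbound
    _ = _ := add_comm _ _

theorem lintegral_Ioi_norm_sq_le (hv : ∀ r ∈ Ioi (0 : ℝ), HasDerivAt v (v' r) r)
    (hv' : AEStronglyMeasurable v' (volume.restrict (Ioi 0)))
    (hfin : ∫⁻ r in Ioi (0 : ℝ), ENNReal.ofReal (r ^ 2 * ‖v r‖ ^ 2) ≠ ∞) :
    ∫⁻ r in Ioi (0 : ℝ), ENNReal.ofReal (‖v r‖ ^ 2) ≤
      4 * ∫⁻ r in Ioi (0 : ℝ), ENNReal.ofReal (r ^ 2 * ‖v' r‖ ^ 2) := by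
  rcases eq_or_ne (∫⁻ r in Ioi (0 : ℝ), ENNReal.ofReal (r ^ 2 * ‖v' r‖ ^ 2)) ∞ with hT | hT
  · simp [hT]
  have hint : IntegrableOn (fun r => r ^ 2 * ‖v' r‖ ^ 2) (Ioi 0) := by
    refine ⟨(aestronglyMeasurable_id.pow 2).mul (hv'.norm.pow 2), ?_⟩
    rw [hasFiniteIntegral_iff_ofReal (Eventually.of_forall fun r => by positivity)]
    exact hT.lt_top
  have hcover : AECover (volume.restrict (Ioi (0 : ℝ))) (𝓝[>] 0) fun a => Ioi a ∩ Iic a⁻¹ :=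
    (aecover_Ioi_of_Ioi (tendsto_id.mono_left nhdsWithin_le_nhds)).inter
      (aecover_Iic tendsto_inv_nhdsGT_zero)
  refine le_of_tendsto (hcover.lintegral_tendsto_of_countably_generated
    (((continuousOn_of_forall_continuousAt fun r hr => (hv r hr).continuousAt).aestronglyMeasurable
      measurableSet_Ioi).norm.aemeasurable.pow_const 2).ennreal_ofReal) ?_
  filter_upwards [self_mem_nhdsWithin] with a ha
  exact (lintegral_mono' (Measure.restrict_mono Ioi_inter_Iic.subset Measure.restrict_le_self)
    le_rfl).trans (lintegral_Ioc_norm_sq_le_of_integrableOn_Ioi hv hv' hfin hint ha a⁻¹)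

end Hardy

lemma gradSq_nonneg {m : ℕ} (u : E3 → Cd m) (x : E3) : 0 ≤ gradSq u x :=
  Finset.sum_nonneg fun _ _ => sq_nonneg _

lemma measurable_gradSq {m : ℕ} (u : E3 → Cd m) : Measurable (gradSq u) :=
  Finset.measurable_sum _ fun _ _ => (measurable_fderiv_apply_const ℝ u _).norm.pow_const 2

lemma norm_fderiv_apply_sq_le_gradSq {m : ℕ} (u : E3 → Cd m) (x : E3) {ω : E3}
    (hω : ‖ω‖ = 1) :
    ‖fderiv ℝ u x ω‖ ^ 2 ≤ gradSq u x := by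
  simpa [hω, gradSq] using
    norm_apply_sq_le_norm_sq_mul_sum_norm_apply_single_sq (fderiv ℝ u x) ω

theorem lintegral_ray_norm_sq_div_dist_sq_le {m : ℕ} {u : E3 → Cd m} (hu : Differentiable ℝ u)
    (z : E3) {ω : E3} (hω : ‖ω‖ = 1)
    (hfin : ∫⁻ r in Ioi (0 : ℝ),
      ENNReal.ofReal (r ^ 2) * ENNReal.ofReal (‖u (z + r • ω)‖ ^ 2) ≠ ∞) :
    ∫⁻ r in Ioi (0 : ℝ), ENNReal.ofReal (r ^ 2) *
        ENNReal.ofReal (‖u (z + r • ω)‖ ^ 2 / dist (z + r • ω) z ^ 2) ≤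
      4 * ∫⁻ r in Ioi (0 : ℝ),
        ENNReal.ofReal (r ^ 2) * ENNReal.ofReal (gradSq u (z + r • ω)) := by
  have hv : ∀ r ∈ Ioi (0 : ℝ), HasDerivAt (fun r : ℝ => u (z + r • ω))
      (fderiv ℝ u (z + r • ω) ω) r := fun r _ =>
    (hu _).hasFDerivAt.comp_hasDerivAt r
      (by simpa using ((hasDerivAt_id r).smul_const ω).const_add z)
  have hv' :
      AEStronglyMeasurable (fun r : ℝ => fderiv ℝ u (z + r • ω) ω) (volume.restrict (Ioi 0)) :=
    ((measurable_fderiv_apply_const ℝ u ω).comp (by fun_prop)).aestronglyMeasurable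
  have hray := lintegral_Ioi_norm_sq_le hv hv' (by
    rwa [setLIntegral_congr_fun measurableSet_Ioi fun r _ => ENNReal.ofReal_mul (sq_nonneg r)])
  calc _ = ∫⁻ r in Ioi (0 : ℝ), ENNReal.ofReal (‖u (z + r • ω)‖ ^ 2) := by
        refine setLIntegral_congr_fun measurableSet_Ioi fun r (hr : 0 < r) => ?_
        rw [← ENNReal.ofReal_mul (sq_nonneg r), dist_eq_norm, add_sub_cancel_left, norm_smul, hω,
          mul_one, Real.norm_of_nonneg hr.le, mul_div_cancel₀ _ (pow_ne_zero 2 hr.ne')]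
    _ ≤ _ := hray.trans (by
        gcongr 4 * ?_
        refine setLIntegral_mono' measurableSet_Ioi fun r _ => ?_
        rw [← ENNReal.ofReal_mul (sq_nonneg r)]
        exact ENNReal.ofReal_le_ofReal
          (mul_le_mul_of_nonneg_left (norm_fderiv_apply_sq_le_gradSq u _ hω) (sq_nonneg r)))

theorem lintegral_norm_sq_div_dist_sq_le {m : ℕ} {u : E3 → Cd m} (hu : Differentiable ℝ u)
    (hfin : ∫⁻ x, ENNReal.ofReal (‖u x‖ ^ 2) ≠ ∞) (z : E3) :
    ∫⁻ x, ENNReal.ofReal (‖u x‖ ^ 2 / dist x z ^ 2) ≤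
      4 * ∫⁻ x, ENNReal.ofReal (gradSq u x) := by
  have hpolar : ∀ {F : E3 → ℝ≥0∞}, Measurable F → ∫⁻ x, F x = ∫⁻ ω : sphere (0 : E3) 1,
      ∫⁻ r in Ioi (0 : ℝ), ENNReal.ofReal (r ^ 2) * F (z + r • (ω : E3)) ∂volume
        ∂(volume : Measure E3).toSphere := fun hF => by
    simpa using lintegral_eq_lintegral_toSphere_lintegral_Ioi volume hF z
  have hum : Measurable u := hu.continuous.measurable
  have hn : Measurable fun x => ENNReal.ofReal (‖u x‖ ^ 2) :=
    (hum.norm.pow_const 2).ennreal_ofReal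
  have hray : Measurable fun ω : sphere (0 : E3) 1 => ∫⁻ r in Ioi (0 : ℝ),
      ENNReal.ofReal (r ^ 2) * ENNReal.ofReal (‖u (z + r • (ω : E3))‖ ^ 2) ∂volume :=
    Measurable.lintegral_prod_right' (f := fun p : sphere (0 : E3) 1 × ℝ =>
      ENNReal.ofReal (p.2 ^ 2) * ENNReal.ofReal (‖u (z + p.2 • (p.1 : E3))‖ ^ 2)) (by fun_prop)
  rw [hpolar hn] at hfin
  rw [hpolar (by fun_prop), hpolar (measurable_gradSq u).ennreal_ofReal,
    ← lintegral_const_mul' 4 _ (by norm_num)]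
  refine lintegral_mono_ae ?_
  filter_upwards [ae_lt_top hray hfin] with ω hω
  exact lintegral_ray_norm_sq_div_dist_sq_le hu z (mem_sphere_zero_iff_norm.1 ω.2) hω.ne

lemma ofReal_rpow_half {a : ℝ} (ha : 0 ≤ a) :
    ENNReal.ofReal a ^ (1 / 2 : ℝ) = ENNReal.ofReal √a := by
  rw [ENNReal.ofReal_rpow_of_nonneg ha (by norm_num), Real.sqrt_eq_rpow]

theorem lintegral_norm_sq_div_dist_le {m : ℕ} {u : E3 → Cd m} (hu : MemH1 u) (x : E3) :
    ∫⁻ y, ENNReal.ofReal (‖u y‖ ^ 2 / dist x y) ≤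
      ENNReal.ofReal (2 * √(∫ y, ‖u y‖ ^ 2) * √(∫ y, gradSq u y)) := by
  obtain ⟨hdiff, hint, hgrad⟩ := hu
  have hn : Measurable fun y => ‖u y‖ ^ 2 := hdiff.continuous.measurable.norm.pow_const 2
  have hN : ∫⁻ y, ENNReal.ofReal (‖u y‖ ^ 2) = ENNReal.ofReal (∫ y, ‖u y‖ ^ 2) :=
    (ofReal_integral_eq_lintegral_ofReal hint (Eventually.of_forall fun y => sq_nonneg _)).symm
  have hG : ∫⁻ y, ENNReal.ofReal (gradSq u y) = ENNReal.ofReal (∫ y, gradSq u y) :=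
    (ofReal_integral_eq_lintegral_ofReal hgrad (Eventually.of_forall (gradSq_nonneg u))).symm
  have hHardy := lintegral_norm_sq_div_dist_sq_le hdiff (hN ▸ ENNReal.ofReal_ne_top) x
  -- Cauchy–Schwarz after writing `n / d = √n * √(n / d²)`
  have hsplit : ∀ y, ENNReal.ofReal (‖u y‖ ^ 2 / dist x y) =
      ENNReal.ofReal (‖u y‖ ^ 2) ^ (1 / 2 : ℝ) *
        ENNReal.ofReal (‖u y‖ ^ 2 / dist y x ^ 2) ^ (1 / 2 : ℝ) := fun y => by
    rw [ofReal_rpow_half (by positivity), ofReal_rpow_half (by positivity),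
      ← ENNReal.ofReal_mul (Real.sqrt_nonneg _), ← Real.sqrt_mul (by positivity), dist_comm y x,
      show ‖u y‖ ^ 2 * (‖u y‖ ^ 2 / dist x y ^ 2) = (‖u y‖ ^ 2 / dist x y) ^ 2 by ring,
      Real.sqrt_sq (by positivity)]
  calc ∫⁻ y, ENNReal.ofReal (‖u y‖ ^ 2 / dist x y)
      ≤ (∫⁻ y, ENNReal.ofReal (‖u y‖ ^ 2)) ^ (1 / 2 : ℝ) *
          (∫⁻ y, ENNReal.ofReal (‖u y‖ ^ 2 / dist y x ^ 2)) ^ (1 / 2 : ℝ) := by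
        simp_rw [hsplit]
        exact ENNReal.lintegral_mul_norm_pow_le hn.ennreal_ofReal.aemeasurable
          (by fun_prop) (by norm_num) (by norm_num) (by norm_num)
    _ ≤ ENNReal.ofReal (∫ y, ‖u y‖ ^ 2) ^ (1 / 2 : ℝ) *
          ENNReal.ofReal (4 * ∫ y, gradSq u y) ^ (1 / 2 : ℝ) := by
        rw [hN, ENNReal.ofReal_mul (by norm_num), ENNReal.ofReal_ofNat, ← hG]
        gcongr
    _ = _ := by
        rw [ofReal_rpow_half (integral_nonneg fun y => sq_nonneg _),
          ofReal_rpow_half (mul_nonneg zero_le_four (integral_nonneg (gradSq_nonneg u))),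
          ← ENNReal.ofReal_mul (Real.sqrt_nonneg _), Real.sqrt_mul zero_le_four,
          show √4 = 2 by rw [show (4 : ℝ) = 2 ^ 2 by norm_num, Real.sqrt_sq zero_le_two]]
        ring_nf

theorem lintegral_norm_sq_mul_norm_sq_div_dist_le {m : ℕ} {u : E3 → Cd m} (hu : MemH1 u) :
    ∫⁻ p : E3 × E3, ENNReal.ofReal (‖u p.1‖ ^ 2 * ‖u p.2‖ ^ 2 / dist p.1 p.2) ≤
      ENNReal.ofReal ((∫ x, ‖u x‖ ^ 2) * (2 * √(∫ x, ‖u x‖ ^ 2) * √(∫ x, gradSq u x))) := by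
  have hum : Measurable u := hu.1.continuous.measurable
  rw [Measure.volume_eq_prod, lintegral_prod _ (by fun_prop),
    ENNReal.ofReal_mul (integral_nonneg fun x => sq_nonneg _),
    ofReal_integral_eq_lintegral_ofReal hu.2.1 (Eventually.of_forall fun x => sq_nonneg _),
    ← lintegral_mul_const' _ _ ENNReal.ofReal_ne_top]
  refine lintegral_mono fun x => ?_
  simp_rw [mul_div_assoc, ENNReal.ofReal_mul (sq_nonneg ‖u x‖)]
  rw [lintegral_const_mul' _ _ ENNReal.ofReal_ne_top]
  exact mul_le_mul_right (lintegral_norm_sq_div_dist_le hu x) _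

theorem integrable_norm_sq_mul_norm_sq_div_dist {m : ℕ} {u : E3 → Cd m} (hu : MemH1 u) :
    Integrable (fun p : E3 × E3 => ‖u p.1‖ ^ 2 * ‖u p.2‖ ^ 2 / dist p.1 p.2) := by
  have hum : Measurable u := hu.1.continuous.measurable
  refine ⟨(by fun_prop : Measurable _).aestronglyMeasurable, ?_⟩
  rw [hasFiniteIntegral_iff_ofReal (Eventually.of_forall fun p => by positivity)]
  exact (lintegral_norm_sq_mul_norm_sq_div_dist_le hu).trans_lt ENNReal.ofReal_lt_top

theorem integral_integral_norm_sq_mul_norm_sq_div_dist_le {m : ℕ} {u : E3 → Cd m}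
    (hu : MemH1 u) :
    ∫ x, ∫ y, ‖u x‖ ^ 2 * ‖u y‖ ^ 2 / dist x y ≤
      (∫ x, ‖u x‖ ^ 2) * (2 * √(∫ x, ‖u x‖ ^ 2) * √(∫ x, gradSq u x)) := by
  have hint := integrable_norm_sq_mul_norm_sq_div_dist hu
  rw [Measure.volume_eq_prod] at hint
  rw [← integral_prod _ hint,
    integral_eq_lintegral_of_nonneg_ae (Eventually.of_forall fun p => by positivity)
      hint.aestronglyMeasurable]
  exact ENNReal.toReal_le_of_le_ofReal
    (mul_nonneg (integral_nonneg fun x => sq_nonneg _) (by positivity))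
    (lintegral_norm_sq_mul_norm_sq_div_dist_le hu)

theorem Dint_norm_sq_le_mul_sqrt_Tkin {m : ℕ} {u : E3 → Cd m} (hu : MemH1 u) :
    Dint (fun x => ‖u x‖ ^ 2) ≤ (∫ x, ‖u x‖ ^ 2) * √(∫ x, ‖u x‖ ^ 2) * √(Tkin u) := by
  set N := ∫ x, ‖u x‖ ^ 2
  have hN : 0 ≤ N := integral_nonneg fun x => sq_nonneg _
  have hG : √(∫ x, gradSq u x) = √2 * √(Tkin u) := by
    rw [← Real.sqrt_mul zero_le_two, Tkin]
    ring_nf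
  have hc : 2 * √2 ≤ 16 * π := by
    nlinarith [Real.sq_sqrt zero_le_two, Real.sqrt_nonneg 2, pi_gt_three]
  calc Dint (fun x => ‖u x‖ ^ 2) ≤ 1 / (16 * π) * (N * (2 * √N * (√2 * √(Tkin u)))) := by
        rw [← hG]
        exact mul_le_mul_of_nonneg_left (integral_integral_norm_sq_mul_norm_sq_div_dist_le hu)
          (by positivity)
    _ = 2 * √2 / (16 * π) * (N * √N * √(Tkin u)) := by ring
    _ ≤ N * √N * √(Tkin u) :=
        mul_le_of_le_one_left (by positivity) ((div_le_one (by positivity)).2 hc)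

/-- There are universal constants `C, C' > 0` such that for every
`u ∈ H¹(ℝ³,ℂ^m)`, with `n = |u|²` and `N = ‖u‖₂²`, the interaction energy `D[n]` is finite
and satisfies `D[n] ≤ (1/4) T[u] + C N³`, and also `D[n] ≤ C' N^{3/2} T[u]^{1/2}`. -/
theorem Dint_bound_by_kinetic :
    ∃ C > (0 : ℝ), ∃ C' > (0 : ℝ), ∀ (m : ℕ) (u : E3 → Cd m), MemH1 u →
      Integrable (fun p : E3 × E3 => ‖u p.1‖ ^ 2 * ‖u p.2‖ ^ 2 / dist p.1 p.2) ∧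
      Dint (fun x => ‖u x‖ ^ 2) ≤ (1 / 4) * Tkin u + C * (∫ x, ‖u x‖ ^ 2) ^ 3 ∧
      Dint (fun x => ‖u x‖ ^ 2) ≤
        C' * (∫ x, ‖u x‖ ^ 2) ^ ((3 : ℝ) / 2) * (Tkin u) ^ ((1 : ℝ) / 2) := by
  refine ⟨1, one_pos, 1, one_pos, fun m u hu => ?_⟩
  set N := ∫ x, ‖u x‖ ^ 2
  have hN : 0 ≤ N := integral_nonneg fun x => sq_nonneg _
  have hT : 0 ≤ Tkin u := mul_nonneg one_half_pos.le (integral_nonneg (gradSq_nonneg u))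
  have hD := Dint_norm_sq_le_mul_sqrt_Tkin hu
  refine ⟨integrable_norm_sq_mul_norm_sq_div_dist hu, ?_, ?_⟩
  · have hN3 : (N * √N) ^ 2 = N ^ 3 := by rw [mul_pow, Real.sq_sqrt hN]; ring
    nlinarith [sq_nonneg (√(Tkin u) / 2 - N * √N), Real.sq_sqrt hT]
  · rw [one_mul, show (3 : ℝ) / 2 = 1 + 1 / 2 by norm_num, Real.rpow_add' hN (by norm_num),
      Real.rpow_one, ← Real.sqrt_eq_rpow, ← Real.sqrt_eq_rpow]
    exact hD
end
end

section
/- (Radial lemma of Strauss type.) There exists a universal constant C > 0 such that for every u ∈ H¹(ℝ³,ℂ^m) whose modulus is radially symmetric (|u(Rx)| = |u(x)| for every rotation R ∈ SO(3) and almost every x), one has |u(x)| ≤ C ‖u‖_{H¹} / |x| for almost every x ∈ ℝ³ ∖ {0}. -/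
noncomputable section
open MeasureTheory Filter Real
open scoped Topology ENNReal

/-- A rotation of `ℝ³`: a linear isometry of determinant one. -/
def IsRot (R : E3 ≃ₗᵢ[ℝ] E3) : Prop :=
  LinearMap.det (R.toLinearEquiv : E3 →ₗ[ℝ] E3) = 1

open Set Metric Matrix
open scoped RealInnerProductSpace

namespace Geo

def onbMat (D : OrthonormalBasis (Fin 3) ℝ E3) : Matrix (Fin 3) (Fin 3) ℝ :=
  Matrix.of fun k i => D i k

lemma det_repr_symm (D : OrthonormalBasis (Fin 3) ℝ E3) :
    LinearMap.det (D.repr.symm.toLinearEquiv : E3 →ₗ[ℝ] E3) = (onbMat D).det := by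
  rw [← LinearMap.det_toMatrix (EuclideanSpace.basisFun (Fin 3) ℝ).toBasis]
  congr 1
  ext i j
  rw [LinearMap.toMatrix_apply]
  simp [onbMat, OrthonormalBasis.coe_toBasis_repr_apply, OrthonormalBasis.coe_toBasis,
    EuclideanSpace.basisFun_apply, EuclideanSpace.basisFun_repr]

lemma onbMat_mul (D : OrthonormalBasis (Fin 3) ℝ E3) :
    (onbMat D)ᵀ * onbMat D = 1 := by
  ext i j
  have := D.orthonormal
  rw [orthonormal_iff_ite] at this
  have h2 := this i j
  rw [PiLp.inner_apply] at h2
  simp only [RCLike.inner_apply, conj_trivial] at h2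
  simp only [Matrix.mul_apply, Matrix.transpose_apply, onbMat, Matrix.of_apply, Matrix.one_apply]
  rw [← h2]
  exact Finset.sum_congr rfl fun _ _ => mul_comm _ _

lemma det_onbMat_sq (D : OrthonormalBasis (Fin 3) ℝ E3) :
    (onbMat D).det * (onbMat D).det = 1 := by
  have := congrArg Matrix.det (onbMat_mul D)
  rwa [Matrix.det_mul, Matrix.det_transpose, Matrix.det_one] at this

lemma det_repr (D : OrthonormalBasis (Fin 3) ℝ E3) :
    LinearMap.det (D.repr.toLinearEquiv : E3 →ₗ[ℝ] E3) = (onbMat D).det := by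
  have h1 : (D.repr.symm.toLinearEquiv : E3 →ₗ[ℝ] E3).comp (D.repr.toLinearEquiv : E3 →ₗ[ℝ] E3)
      = LinearMap.id := by
    ext x
    simp
  have h2 := congrArg LinearMap.det h1
  rw [LinearMap.det_comp, LinearMap.det_id, det_repr_symm] at h2
  have hsq := det_onbMat_sq D
  calc LinearMap.det (D.repr.toLinearEquiv : E3 →ₗ[ℝ] E3)
      = ((onbMat D).det * (onbMat D).det) * LinearMap.det (D.repr.toLinearEquiv : E3 →ₗ[ℝ] E3) := by
        rw [hsq, one_mul]
    _ = (onbMat D).det * ((onbMat D).det * LinearMap.det (D.repr.toLinearEquiv : E3 →ₗ[ℝ] E3)) := by ring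
    _ = (onbMat D).det := by rw [h2, mul_one]

theorem exists_rot (a b : E3) (hab : ‖a‖ = ‖b‖) : ∃ R : E3 ≃ₗᵢ[ℝ] E3, IsRot R ∧ R a = b := by
  rcases eq_or_ne a 0 with rfl | ha
  · refine ⟨LinearIsometryEquiv.refl ℝ E3, ?_, ?_⟩
    · have : ((LinearIsometryEquiv.refl ℝ E3).toLinearEquiv : E3 →ₗ[ℝ] E3) = LinearMap.id := rfl
      rw [IsRot, this, LinearMap.det_id]
    · have : b = 0 := by
        rw [← norm_eq_zero]; rw [← hab]; simp
      simp [this]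
  · have hna : (0:ℝ) < ‖a‖ := norm_pos_iff.2 ha
    set a' : E3 := ‖a‖⁻¹ • a with ha'
    set b' : E3 := ‖b‖⁻¹ • b with hb'
    have hua : ‖a'‖ = 1 := by
      rw [ha', norm_smul]; simp [abs_of_pos (inv_pos.2 hna)]
      field_simp
    have hub : ‖b'‖ = 1 := by
      rw [hb', norm_smul, ← hab]; simp [abs_of_pos (inv_pos.2 hna)]
      field_simp
    have hcard : Module.finrank ℝ E3 = Fintype.card (Fin 3) := by simp
    have honb : ∀ c : E3, ‖c‖ = 1 →
        Orthonormal ℝ (({0} : Set (Fin 3)).restrict (fun _ : Fin 3 => c)) := by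
      intro c hc
      rw [orthonormal_iff_ite]
      rintro ⟨i, hi⟩ ⟨j, hj⟩
      simp only [Set.mem_singleton_iff] at hi hj
      subst hi; subst hj
      rw [if_pos rfl]
      have : (inner ℝ c c : ℝ) = ‖c‖ ^ 2 := real_inner_self_eq_norm_sq c
      change inner ℝ c c = (1:ℝ)
      rw [this, hc]; norm_num
    obtain ⟨B, hB⟩ := (honb a' hua).exists_orthonormalBasis_extension_of_card_eq hcard
    obtain ⟨C, hC⟩ := (honb b' hub).exists_orthonormalBasis_extension_of_card_eq hcard
    have hB0 : B 0 = a' := hB 0 rfl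
    have hC0 : C 0 = b' := hC 0 rfl
    have key : ∀ D : OrthonormalBasis (Fin 3) ℝ E3, D 0 = b' →
        ∃ R : E3 ≃ₗᵢ[ℝ] E3,
          LinearMap.det (R.toLinearEquiv : E3 →ₗ[ℝ] E3) = (onbMat D).det * (onbMat B).det
          ∧ R a = b := by
      intro D hD0
      refine ⟨B.repr.trans D.repr.symm, ?_, ?_⟩
      · have hco : ((B.repr.trans D.repr.symm).toLinearEquiv : E3 →ₗ[ℝ] E3)
            = (D.repr.symm.toLinearEquiv : E3 →ₗ[ℝ] E3).comp (B.repr.toLinearEquiv : E3 →ₗ[ℝ] E3) := by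
          rfl
        rw [hco, LinearMap.det_comp, det_repr_symm, det_repr]
      · have h1 : B.repr a' = EuclideanSpace.single 0 1 := by
          rw [← hB0, OrthonormalBasis.repr_self]
        have hRa' : (B.repr.trans D.repr.symm) a' = b' := by
          simp [LinearIsometryEquiv.trans_apply, h1, OrthonormalBasis.repr_symm_single, hD0]
        have hsm : a = ‖a‖ • a' := by rw [ha', smul_inv_smul₀ hna.ne']
        rw [hsm, LinearIsometryEquiv.map_smul, hRa', hb', hab, smul_inv_smul₀]
        rw [← hab]; exact hna.ne'
    obtain ⟨R₁, hdet1, hR1⟩ := key C hC0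
    set C₂ := C.reindex (Equiv.swap 1 2) with hC₂
    have hC₂0 : C₂ 0 = b' := by
      rw [hC₂, OrthonormalBasis.reindex_apply]
      simpa [Equiv.swap_apply_of_ne_of_ne] using hC0
    obtain ⟨R₂, hdet2, hR2⟩ := key C₂ hC₂0
    have hflip : (onbMat C₂).det = -(onbMat C).det := by
      have h3 : onbMat C₂ = (onbMat C).submatrix id ((Equiv.swap (1:Fin 3) 2)) := by
        ext k i
        simp [onbMat, hC₂, OrthonormalBasis.reindex_apply, Matrix.submatrix_apply]
      rw [h3, Matrix.det_permute', Equiv.Perm.sign_swap (by decide)]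
      simp
    have hsqC := det_onbMat_sq C
    have hsqB := det_onbMat_sq B
    set x := (onbMat C).det with hx
    set y := (onbMat B).det with hy
    have hxy : (x * y) * (x * y) = 1 := by nlinarith
    rcases mul_self_eq_one_iff.1 hxy with h | h
    · exact ⟨R₁, by rw [IsRot, hdet1, h], hR1⟩
    · refine ⟨R₂, ?_, hR2⟩
      rw [IsRot, hdet2, hflip]
      have : -x * y = -(x*y) := by ring
      rw [this, h]; norm_num
end Geo

namespace Polar

lemma lintegral_norm (g : ℝ → ℝ≥0∞) (hg : Measurable g) :
    ∫⁻ x : E3, g ‖x‖ = (3 : ℝ≥0∞) * volume (ball (0:E3) 1) *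
      ∫⁻ y in Ioi (0:ℝ), ENNReal.ofReal (y^2) * g y := by
  have h0 : ∫⁻ x : E3, g ‖x‖
      = ∫⁻ x : ({(0:E3)}ᶜ : Set E3),
          g ‖(x : E3)‖ ∂(volume.comap (Subtype.val : ({(0:E3)}ᶜ : Set E3) → E3)) := by
    rw [lintegral_subtype_comap (measurableSet_singleton (0:E3)).compl (fun x => g ‖x‖),
      MeasureTheory.restrict_compl_singleton]
  rw [h0]
  have mp := (volume : Measure E3).measurePreserving_homeomorphUnitSphereProd
  have hemb := (Homeomorph.measurableEmbedding (homeomorphUnitSphereProd E3))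
  have h1 := mp.lintegral_comp_emb hemb
    (fun p : sphere (0:E3) 1 × Ioi (0:ℝ) => g p.2.1)
  have hdim : Module.finrank ℝ E3 = 3 := by simp
  have h2 : (∫⁻ x : ({(0:E3)}ᶜ : Set E3),
        g ‖(x : E3)‖ ∂(volume.comap (Subtype.val : ({(0:E3)}ᶜ : Set E3) → E3)))
      = ∫⁻ p : sphere (0:E3) 1 × Ioi (0:ℝ), g p.2.1
          ∂((volume : Measure E3).toSphere.prod (.volumeIoiPow (Module.finrank ℝ E3 - 1))) := by
    rw [← h1]
    congr 1; funext x; simp [homeomorphUnitSphereProd, homeomorphSphereProd]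
  rw [h2, lintegral_prod _ (by fun_prop), hdim]
  have h3 : (∫⁻ y : Ioi (0:ℝ), g y.1 ∂(Measure.volumeIoiPow 2))
      = ∫⁻ y in Ioi (0:ℝ), ENNReal.ofReal (y^2) * g y := by
    rw [Measure.volumeIoiPow, lintegral_withDensity_eq_lintegral_mul _
      (by fun_prop) (by fun_prop)]
    have := lintegral_subtype_comap (μ := (volume : Measure ℝ)) (measurableSet_Ioi (a := (0:ℝ)))
      (fun y => ENNReal.ofReal (y^2) * g y)
    rw [← this]
    rfl
  simp only [h3]
  rw [lintegral_const]
  rw [Measure.toSphere_apply_univ, hdim]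
  ring

lemma radial_key (w : ℝ → ℝ) (hwm : Measurable w) (hw0 : ∀ y, 0 ≤ w y)
    (F : E3 → ℝ) (hF : Integrable F) (hle : ∀ x : E3, w ‖x‖ ≤ F x) :
    IntegrableOn (fun y => y^2 * w y) (Ioi 0) ∧
    Integrable (fun x : E3 => w ‖x‖) ∧
    (3 * (volume (ball (0:E3) 1)).toReal) * ∫ y in Ioi (0:ℝ), y^2 * w y = ∫ x : E3, w ‖x‖ := by
  have hwn : Integrable (fun x : E3 => w ‖x‖) := by
    refine hF.mono' ((hwm.comp measurable_norm).aestronglyMeasurable) ?_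
    exact ae_of_all _ fun x => by
      rw [Real.norm_eq_abs, abs_of_nonneg (hw0 _)]; exact hle x
  have hball0 : volume (ball (0:E3) 1) ≠ 0 := (measure_ball_pos _ _ one_pos).ne'
  have hballT : volume (ball (0:E3) 1) ≠ ∞ := measure_ball_lt_top.ne
  have h1 : (∫⁻ x : E3, ENNReal.ofReal (w ‖x‖)) < ∞ := by
    have := hwn.2
    rw [HasFiniteIntegral] at this
    refine lt_of_le_of_lt (lintegral_mono fun x => ?_) this
    rw [← Real.enorm_eq_ofReal (hw0 _)]
  have heq := lintegral_norm (fun y => ENNReal.ofReal (w y)) (by fun_prop)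
  have hfin : (∫⁻ y in Ioi (0:ℝ), ENNReal.ofReal (y^2) * ENNReal.ofReal (w y)) < ∞ := by
    by_contra hcon
    push_neg at hcon
    rw [top_le_iff] at hcon
    rw [heq, hcon, ENNReal.mul_top] at h1
    · exact (lt_irrefl _ h1).elim
    · intro h
      rcases mul_eq_zero.1 h with h | h
      · norm_num at h
      · exact hball0 h
  have hion : IntegrableOn (fun y => y^2 * w y) (Ioi 0) := by
    constructor
    · exact ((measurable_id.pow_const 2).mul hwm).aestronglyMeasurable.restrict
    · rw [HasFiniteIntegral]
      have hcg : (∫⁻ y in Ioi (0:ℝ), ‖y^2 * w y‖ₑ)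
          = ∫⁻ y in Ioi (0:ℝ), ENNReal.ofReal (y^2) * ENNReal.ofReal (w y) := by
        apply lintegral_congr_ae
        filter_upwards [ae_restrict_mem measurableSet_Ioi] with y hy
        rw [← ENNReal.ofReal_mul (sq_nonneg y), ← Real.enorm_eq_ofReal
          (mul_nonneg (sq_nonneg y) (hw0 y))]
      rw [hcg]
      exact hfin
  refine ⟨hion, hwn, ?_⟩
  have hform := integral_fun_norm_addHaar (volume : Measure E3) w
  have hdim : Module.finrank ℝ E3 = 3 := by simp
  rw [hdim] at hform
  rw [hform]
  simp only [nsmul_eq_mul, smul_eq_mul, measureReal_def]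
  norm_num
  ring

end Polar

namespace OneD

theorem strauss (φ ψ : ℝ → ℝ) (hφd : Differentiable ℝ φ) (hφ0 : ∀ r, 0 ≤ φ r)
    (hψ0 : ∀ r, 0 ≤ ψ r)
    (hd : ∀ r, 0 < r → |deriv φ r| ≤ 2 * Real.sqrt (φ r) * Real.sqrt (ψ r))
    (hA : IntegrableOn (fun y => y^2 * φ y) (Ioi 0))
    (hB : IntegrableOn (fun y => y^2 * ψ y) (Ioi 0))
    {r : ℝ} (hr : 0 < r) :
    r^2 * φ r ≤ (∫ y in Ioi (0:ℝ), y^2 * φ y) + ∫ y in Ioi (0:ℝ), y^2 * ψ y := by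
  set A := ∫ y in Ioi (0:ℝ), y^2 * φ y with hAdef
  set B := ∫ y in Ioi (0:ℝ), y^2 * ψ y with hBdef
  set m : ℝ → ℝ := fun t => t^2 * φ t + t^2 * ψ t with hmdef
  have hm : IntegrableOn m (Ioi 0) := hA.add hB
  have hm0 : ∀ t, 0 ≤ m t := fun t => by
    have := hφ0 t; have := hψ0 t; positivity
  have hmbound : ∀ t, 0 < t → 2 * t^2 * Real.sqrt (φ t) * Real.sqrt (ψ t) ≤ m t := by
    intro t ht
    have h1 : 2 * (t * Real.sqrt (φ t)) * (t * Real.sqrt (ψ t)) ≤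
        (t * Real.sqrt (φ t))^2 + (t * Real.sqrt (ψ t))^2 := two_mul_le_add_sq _ _
    have e1 : (t * Real.sqrt (φ t))^2 = t^2 * φ t := by
      rw [mul_pow, Real.sq_sqrt (hφ0 t)]
    have e2 : (t * Real.sqrt (ψ t))^2 = t^2 * ψ t := by
      rw [mul_pow, Real.sq_sqrt (hψ0 t)]
    rw [e1, e2] at h1
    calc 2 * t^2 * Real.sqrt (φ t) * Real.sqrt (ψ t)
        = 2 * (t * Real.sqrt (φ t)) * (t * Real.sqrt (ψ t)) := by ring
      _ ≤ t^2 * φ t + t^2 * ψ t := h1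
  have hG' : ∀ t : ℝ, HasDerivAt (fun s => s^2 * φ s) (2*t*φ t + t^2 * deriv φ t) t := by
    intro t
    have h1 : HasDerivAt (fun s : ℝ => s^2) (2*t) t := by
      simpa using (hasDerivAt_pow 2 t)
    have := h1.mul (hφd t).hasDerivAt
    convert this using 1
    all_goals rfl
  -- integrability of the derivative on subintervals
  have hderiv_int : ∀ s : ℝ, r ≤ s → IntervalIntegrable
      (fun t => 2*t*φ t + t^2 * deriv φ t) volume r s := by
    intro s hs
    have hc : Continuous φ := hφd.continuous
    have h1 : IntervalIntegrable (fun t => 2*t*φ t) volume r s :=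
      (by fun_prop : Continuous fun t => 2*t*φ t).intervalIntegrable r s
    have h2 : IntervalIntegrable (fun t => t^2 * deriv φ t) volume r s := by
      rw [intervalIntegrable_iff_integrableOn_Ioc_of_le hs]
      refine Integrable.mono' (hm.mono_set (Ioc_subset_Ioi_self.trans (Ioi_subset_Ioi hr.le)) |>.mono_set
        (by intro x hx; exact hx)) ?_ ?_
      · exact (measurable_id.pow_const 2).aestronglyMeasurable.mul
          ((measurable_deriv φ).aestronglyMeasurable.mono_measure Measure.restrict_le_self)
      · filter_upwards [ae_restrict_mem measurableSet_Ioc] with t ht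
        have ht0 : 0 < t := lt_of_lt_of_le hr ht.1.le
        have : |t^2 * deriv φ t| = t^2 * |deriv φ t| := by
          rw [abs_mul, abs_of_nonneg (sq_nonneg t)]
        rw [Real.norm_eq_abs, this]
        calc t^2 * |deriv φ t| ≤ t^2 * (2 * Real.sqrt (φ t) * Real.sqrt (ψ t)) := by
              exact mul_le_mul_of_nonneg_left (hd t ht0) (sq_nonneg t)
          _ = 2 * t^2 * Real.sqrt (φ t) * Real.sqrt (ψ t) := by ring
          _ ≤ m t := hmbound t ht0
    exact h1.add h2
  -- main estimate for r ≤ s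
  have hmain : ∀ s : ℝ, r ≤ s → r^2 * φ r ≤ s^2 * φ s + (A + B) := by
    intro s hs
    have hftc : ∫ t in r..s, (2*t*φ t + t^2 * deriv φ t)
        = s^2 * φ s - r^2 * φ r := by
      exact intervalIntegral.integral_eq_sub_of_hasDerivAt
        (fun t _ => hG' t) (hderiv_int s hs)
    have hmono : -(s^2 * φ s - r^2 * φ r) ≤ ∫ t in r..s, m t := by
      rw [← hftc, ← intervalIntegral.integral_neg]
      apply intervalIntegral.integral_mono_on hs ((hderiv_int s hs).neg)
      · rw [intervalIntegrable_iff_integrableOn_Ioc_of_le hs]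
        exact hm.mono_set (Ioc_subset_Ioi_self.trans (Ioi_subset_Ioi hr.le))
      · intro t ht
        have ht0 : 0 < t := lt_of_lt_of_le hr ht.1
        have h2 : -(t^2 * deriv φ t) ≤ t^2 * |deriv φ t| := by
          calc -(t^2 * deriv φ t) ≤ |t^2 * deriv φ t| := neg_le_abs _
            _ = t^2 * |deriv φ t| := by rw [abs_mul, abs_of_nonneg (sq_nonneg t)]
        have h3 : t^2 * |deriv φ t| ≤ m t := by
          calc t^2 * |deriv φ t| ≤ t^2 * (2 * Real.sqrt (φ t) * Real.sqrt (ψ t)) :=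
                mul_le_mul_of_nonneg_left (hd t ht0) (sq_nonneg t)
            _ = 2 * t^2 * Real.sqrt (φ t) * Real.sqrt (ψ t) := by ring
            _ ≤ m t := hmbound t ht0
        have h4 : 0 ≤ 2*t*φ t := by
          have := hφ0 t; positivity
        calc -(2*t*φ t + t^2 * deriv φ t) = -(2*t*φ t) + -(t^2 * deriv φ t) := by ring
          _ ≤ 0 + t^2 * |deriv φ t| := add_le_add (by linarith) h2
          _ ≤ m t := by linarith
    have hIoc : ∫ t in r..s, m t ≤ A + B := by
      rw [intervalIntegral.integral_of_le hs]
      have : (∫ t in Ioc r s, m t) ≤ ∫ t in Ioi 0, m t := by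
        apply setIntegral_mono_set hm
        · exact Filter.Eventually.of_forall (fun t => hm0 t)
        · exact HasSubset.Subset.eventuallyLE (Ioc_subset_Ioi_self.trans (Ioi_subset_Ioi hr.le))
      have hsum : (∫ t in Ioi (0:ℝ), m t) = A + B := by
        rw [hmdef, hAdef, hBdef]
        exact integral_add hA hB
      linarith
    linarith
  -- choose s with small G s
  have hsmall : ∀ ε : ℝ, 0 < ε → ∃ s : ℝ, r ≤ s ∧ s^2 * φ s ≤ ε := by
    intro ε hε
    by_contra hcon
    push_neg at hcon
    have hge : ∀ s ∈ Ioi (max r 0), ε ≤ s^2 * φ s := by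
      intro s hs
      rcases hcon s (le_of_lt (lt_of_le_of_lt (le_max_left r 0) hs)) with h
      linarith
    have hIc : IntegrableOn (fun _ : ℝ => ε) (Ioi (max r 0)) := by
      apply Integrable.mono' (hA.mono_set (Ioi_subset_Ioi (le_max_right r 0)))
        aestronglyMeasurable_const
      filter_upwards [ae_restrict_mem measurableSet_Ioi] with t ht
      rw [Real.norm_eq_abs, abs_of_pos hε]
      exact hge t ht
    rw [integrableOn_const_iff] at hIc
    rcases hIc with h | h
    · exact hε.ne' (enorm_eq_zero.1 h)
    · rw [Real.volume_Ioi] at h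
      exact (lt_irrefl _ h).elim
  have : ∀ ε : ℝ, 0 < ε → r^2 * φ r ≤ (A + B) + ε := by
    intro ε hε
    obtain ⟨s, hs1, hs2⟩ := hsmall ε hε
    have := hmain s hs1
    linarith
  exact le_of_forall_pos_le_add this

end OneD

namespace Strauss

lemma gradSq_nonneg {m : ℕ} (u : E3 → Cd m) (x : E3) : 0 ≤ gradSq u x :=
  Finset.sum_nonneg fun i _ => pow_nonneg (norm_nonneg _) 2

lemma dir_le {m : ℕ} (u : E3 → Cd m) (x ω : E3) (hω : ‖ω‖ = 1) :
    ‖fderiv ℝ u x ω‖^2 ≤ gradSq u x := by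
  set A := fderiv ℝ u x with hA
  have hdecomp : ω = ∑ i : Fin 3, ω i • EuclideanSpace.single i (1:ℝ) := by
    have h := (EuclideanSpace.basisFun (Fin 3) ℝ).sum_repr ω
    nth_rewrite 1 [← h]
    congr 1
    ext i
    rw [EuclideanSpace.basisFun_repr, EuclideanSpace.basisFun_apply]
  have h1 : ‖A ω‖ ≤ ∑ i : Fin 3, |ω i| * ‖A (EuclideanSpace.single i (1:ℝ))‖ := by
    nth_rewrite 1 [hdecomp]
    rw [map_sum]
    refine (norm_sum_le _ _).trans ?_
    apply Finset.sum_le_sum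
    intro i _
    rw [A.map_smul, norm_smul, Real.norm_eq_abs]
  have h2 : (∑ i : Fin 3, |ω i| * ‖A (EuclideanSpace.single i (1:ℝ))‖)^2
      ≤ (∑ i : Fin 3, |ω i|^2) * ∑ i : Fin 3, ‖A (EuclideanSpace.single i (1:ℝ))‖^2 :=
    Finset.sum_mul_sq_le_sq_mul_sq Finset.univ _ _
  have h3 : (∑ i : Fin 3, |ω i|^2) = 1 := by
    have h4 : ‖ω‖^2 = 1 := by rw [hω]; norm_num
    rw [EuclideanSpace.norm_eq, Real.sq_sqrt (by positivity)] at h4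
    simpa [Real.norm_eq_abs] using h4
  calc ‖A ω‖^2 ≤ (∑ i : Fin 3, |ω i| * ‖A (EuclideanSpace.single i (1:ℝ))‖)^2 := by
        apply pow_le_pow_left₀ (norm_nonneg _) h1
    _ ≤ (∑ i : Fin 3, |ω i|^2) * ∑ i : Fin 3, ‖A (EuclideanSpace.single i (1:ℝ))‖^2 := h2
    _ = gradSq u x := by rw [h3, one_mul, gradSq]

end Strauss

/-- (Radial lemma of Strauss type.) There is a universal `C > 0` such that
every `u ∈ H¹(ℝ³,ℂ^m)` with rotation-invariant modulus satisfies
`|u(x)| ≤ C ‖u‖_{H¹} / |x|` for almost every `x ≠ 0`. -/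
theorem radial_lemma :
    ∃ C > (0 : ℝ), ∀ (m : ℕ) (u : E3 → Cd m), MemH1 u →
      (∀ R : E3 ≃ₗᵢ[ℝ] E3, IsRot R →
        ∀ᵐ x ∂(volume : Measure E3), ‖u (R x)‖ = ‖u x‖) →
      ∀ᵐ x ∂(volume : Measure E3), x ≠ 0 → ‖u x‖ ≤ C * H1norm u / ‖x‖ := by
  set κ : ℝ := 3 * (volume (ball (0:E3) 1)).toReal with hκdef
  have hκpos : 0 < κ := by
    have h1 : 0 < (volume (ball (0:E3) 1)).toReal :=
      ENNReal.toReal_pos (measure_ball_pos _ _ one_pos).ne' measure_ball_lt_top.ne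
    positivity
  refine ⟨Real.sqrt κ⁻¹, Real.sqrt_pos.2 (by positivity), ?_⟩
  intro m u hu hrad
  classical
  obtain ⟨hdiff, hint2, hintg⟩ := hu
  set e1 : E3 := EuclideanSpace.single (0 : Fin 3) (1:ℝ) with he1def
  have he1 : ‖e1‖ = 1 := by rw [he1def, EuclideanSpace.norm_single, norm_one]
  have hcont : Continuous u := hdiff.continuous
  -- everywhere rotation invariance
  have hinv : ∀ R : E3 ≃ₗᵢ[ℝ] E3, IsRot R → ∀ y, ‖u (R y)‖ = ‖u y‖ := by
    intro R hR
    have hae := hrad R hR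
    have hc1 : Continuous fun y : E3 => ‖u (R y)‖ := by fun_prop
    have hc2 : Continuous fun y : E3 => ‖u y‖ := by fun_prop
    have heq : (fun y : E3 => ‖u (R y)‖) = fun y : E3 => ‖u y‖ :=
      (hc1.ae_eq_iff_eq volume hc2).1 hae
    exact fun y => congrFun heq y
  -- everywhere radiality
  have hradE : ∀ x : E3, ‖u x‖ = ‖u (‖x‖ • e1)‖ := by
    intro x
    obtain ⟨R, hR, hRx⟩ := Geo.exists_rot (‖x‖ • e1) x
      (by rw [norm_smul, he1, Real.norm_eq_abs, abs_of_nonneg (norm_nonneg x), mul_one])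
    have h2 := hinv R hR (‖x‖ • e1)
    rw [hRx] at h2
    exact h2
  -- 1D profile
  set h : ℝ → Cd m := fun r => u (r • e1) with hhdef
  set d : ℝ → Cd m := fun r => fderiv ℝ u (r • e1) e1 with hddef
  have hh : ∀ r : ℝ, HasDerivAt h (d r) r := by
    intro r
    have h1 : HasDerivAt (fun s : ℝ => s • e1) e1 r := by
      simpa using (hasDerivAt_id r).smul_const e1
    exact ((hdiff (r • e1)).hasFDerivAt).comp_hasDerivAt r h1
  set φ : ℝ → ℝ := fun r => ‖h r‖^2 with hφdef
  have hφ'r : ∀ r : ℝ, HasDerivAt φ (2 * ⟪h r, d r⟫) r := by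
    intro r
    have h2 : HasDerivAt (fun t => (⟪h t, h t⟫ : ℝ)) (⟪h r, d r⟫ + ⟪d r, h r⟫) r :=
      (hh r).inner ℝ (hh r)
    have h3 : (fun t => (⟪h t, h t⟫ : ℝ)) = φ := by
      funext t
      rw [hφdef, real_inner_self_eq_norm_sq]
    rw [h3] at h2
    convert h2 using 1
    rw [real_inner_comm (d r) (h r)]
    ring
  have hφd : Differentiable ℝ φ := fun r => (hφ'r r).differentiableAt
  have hderivφ : ∀ r, deriv φ r = 2 * ⟪h r, d r⟫ := fun r => (hφ'r r).deriv
  have hφ0 : ∀ r, 0 ≤ φ r := fun r => pow_nonneg (norm_nonneg _) 2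
  have hφc : Continuous φ := hφd.continuous
  set ψ : ℝ → ℝ := fun r => if φ r = 0 then 0 else (deriv φ r)^2 / (4 * φ r) with hψdef
  have hψ0 : ∀ r, 0 ≤ ψ r := by
    intro r
    by_cases hz : φ r = 0
    · simp [hψdef, hz]
    · have hpos : 0 < φ r := lt_of_le_of_ne (hφ0 r) (Ne.symm hz)
      simp only [hψdef, if_neg hz]
      positivity
  have hψm : Measurable ψ := by
    have h1 : MeasurableSet {r : ℝ | φ r = 0} := by
      have := hφc.measurable (measurableSet_singleton (0:ℝ))
      exact this
    exact Measurable.ite h1 measurable_const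
      (((measurable_deriv φ).pow_const 2).div (measurable_const.mul hφc.measurable))
  -- pointwise bound along rays
  have hψle : ∀ x : E3, ψ ‖x‖ ≤ gradSq u x := by
    intro x
    by_cases hz : φ ‖x‖ = 0
    · simp only [hψdef, if_pos hz]
      exact Strauss.gradSq_nonneg u x
    · have hφpos : 0 < φ ‖x‖ := lt_of_le_of_ne (hφ0 _) (Ne.symm hz)
      set ω : E3 := if x = 0 then e1 else ‖x‖⁻¹ • x with hωdef
      have hω : ‖ω‖ = 1 := by
        rcases eq_or_ne x 0 with rfl | hx0
        · rw [hωdef, if_pos rfl]; exact he1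
        · rw [hωdef, if_neg hx0, norm_smul, Real.norm_eq_abs,
            abs_of_nonneg (inv_nonneg.2 (norm_nonneg x))]
          exact inv_mul_cancel₀ (norm_ne_zero_iff.2 hx0)
      have hrω : ‖x‖ • ω = x := by
        rcases eq_or_ne x 0 with rfl | hx0
        · simp
        · rw [hωdef, if_neg hx0]
          exact smul_inv_smul₀ (norm_ne_zero_iff.2 hx0) x
      -- deriv φ ‖x‖ = 2⟪u x, fderiv u x ω⟫
      have hderiv_ray : deriv φ ‖x‖ = 2 * ⟪u x, fderiv ℝ u x ω⟫ := by
        rcases eq_or_ne x 0 with rfl | hx0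
        · have h1 := hderivφ 0
          simp only [norm_zero]
          rw [h1]
          have he : (0:ℝ) • e1 = (0:E3) := zero_smul _ _
          have hωe : ω = e1 := by rw [hωdef, if_pos rfl]
          rw [hhdef, hddef, hωe]
          simp [he]
        · -- x ≠ 0
          have hr0 : (0:ℝ) < ‖x‖ := norm_pos_iff.2 hx0
          set k : ℝ → Cd m := fun s => u (s • ω) with hkdef
          have hk : ∀ s : ℝ, HasDerivAt k (fderiv ℝ u (s • ω) ω) s := by
            intro s
            have h1 : HasDerivAt (fun t : ℝ => t • ω) ω s := by
              simpa using (hasDerivAt_id s).smul_const ω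
            exact ((hdiff (s • ω)).hasFDerivAt).comp_hasDerivAt s h1
          set φ₂ : ℝ → ℝ := fun s => ‖k s‖^2 with hφ₂def
          have hφ₂' : HasDerivAt φ₂ (2 * ⟪k ‖x‖, fderiv ℝ u (‖x‖ • ω) ω⟫) ‖x‖ := by
            have h2 : HasDerivAt (fun t => (⟪k t, k t⟫ : ℝ))
                (⟪k ‖x‖, fderiv ℝ u (‖x‖ • ω) ω⟫ + ⟪fderiv ℝ u (‖x‖ • ω) ω, k ‖x‖⟫) ‖x‖ :=
              (hk ‖x‖).inner ℝ (hk ‖x‖)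
            have h3 : (fun t => (⟪k t, k t⟫ : ℝ)) = φ₂ := by
              funext t
              rw [hφ₂def, real_inner_self_eq_norm_sq]
            rw [h3] at h2
            convert h2 using 1
            rw [real_inner_comm (fderiv ℝ u (‖x‖ • ω) ω) (k ‖x‖)]
            ring
          have hloc : φ =ᶠ[𝓝 ‖x‖] φ₂ := by
            filter_upwards [isOpen_Ioi.mem_nhds hr0] with s hs
            have hs0 : (0:ℝ) < s := hs
            have h4 : ‖s • ω‖ = s := by
              rw [norm_smul, hω, Real.norm_eq_abs, abs_of_pos hs0, mul_one]
            have h5 := hradE (s • ω)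
            rw [h4] at h5
            simp only [hφdef, hφ₂def, hkdef, hhdef]
            rw [h5]
          have h6 : deriv φ ‖x‖ = deriv φ₂ ‖x‖ := hloc.deriv_eq
          rw [h6, hφ₂'.deriv]
          simp only [hkdef]
          rw [hrω]
      -- bound
      have hux : ‖u x‖ = Real.sqrt (φ ‖x‖) := by
        rw [hφdef]
        simp only [hhdef]
        rw [Real.sqrt_sq (norm_nonneg _), ← hradE x]
      have habs : |deriv φ ‖x‖| ≤ 2 * Real.sqrt (φ ‖x‖) * ‖fderiv ℝ u x ω‖ := by
        rw [hderiv_ray, abs_mul]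
        rw [show |(2:ℝ)| = 2 by norm_num]
        rw [mul_assoc]
        apply mul_le_mul_of_nonneg_left _ (by norm_num : (0:ℝ) ≤ 2)
        calc |(⟪u x, fderiv ℝ u x ω⟫ : ℝ)| ≤ ‖u x‖ * ‖fderiv ℝ u x ω‖ :=
              abs_real_inner_le_norm _ _
          _ = Real.sqrt (φ ‖x‖) * ‖fderiv ℝ u x ω‖ := by rw [hux]
      have hψval : ψ ‖x‖ = (deriv φ ‖x‖)^2 / (4 * φ ‖x‖) := by
        simp only [hψdef, if_neg hz]
      rw [hψval]
      rw [div_le_iff₀ (by positivity)]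
      have hsq : (deriv φ ‖x‖)^2 ≤ 4 * φ ‖x‖ * ‖fderiv ℝ u x ω‖^2 := by
        have h7 : (deriv φ ‖x‖)^2 = |deriv φ ‖x‖|^2 := (sq_abs _).symm
        rw [h7]
        calc |deriv φ ‖x‖|^2 ≤ (2 * Real.sqrt (φ ‖x‖) * ‖fderiv ℝ u x ω‖)^2 :=
              pow_le_pow_left₀ (abs_nonneg _) habs 2
          _ = 4 * φ ‖x‖ * ‖fderiv ℝ u x ω‖^2 := by
              rw [mul_pow, mul_pow, Real.sq_sqrt (hφ0 _)]
              ring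
      calc (deriv φ ‖x‖)^2 ≤ 4 * φ ‖x‖ * ‖fderiv ℝ u x ω‖^2 := hsq
        _ ≤ 4 * φ ‖x‖ * gradSq u x := by
            apply mul_le_mul_of_nonneg_left (Strauss.dir_le u x ω hω) (by positivity)
        _ = gradSq u x * (4 * φ ‖x‖) := by ring
  -- radial identity for the square
  have hradSq : ∀ x : E3, ‖u x‖^2 = φ ‖x‖ := by
    intro x
    rw [hφdef]
    simp only [hhdef]
    rw [← hradE x]
  -- integral identities via polar coordinates
  obtain ⟨hAint, _, hAeq⟩ := Polar.radial_key φ hφc.measurable hφ0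
    (fun x => ‖u x‖^2) hint2 (fun x => le_of_eq (hradSq x).symm)
  obtain ⟨hBint, hBint2, hBeq⟩ := Polar.radial_key ψ hψm hψ0
    (gradSq u) hintg hψle
  set A' := ∫ y in Ioi (0:ℝ), y^2 * φ y with hA'def
  set B' := ∫ y in Ioi (0:ℝ), y^2 * ψ y with hB'def
  have hAval : κ * A' = ∫ x : E3, ‖u x‖^2 := by
    rw [hκdef, hAeq]
    exact integral_congr_ae (Filter.Eventually.of_forall fun x => (hradSq x).symm)
  have hBval : κ * B' ≤ ∫ x : E3, gradSq u x := by
    rw [hκdef, hBeq]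
    exact integral_mono hBint2 hintg hψle
  -- the 1D derivative bound
  have hd : ∀ r, 0 < r → |deriv φ r| ≤ 2 * Real.sqrt (φ r) * Real.sqrt (ψ r) := by
    intro r hr
    by_cases hzr : φ r = 0
    · have hmin : IsLocalMin φ r := by
        apply Filter.Eventually.of_forall
        intro y
        rw [hzr]
        exact hφ0 y
      rw [hmin.deriv_eq_zero]
      simp only [abs_zero]
      positivity
    · have hφr : 0 < φ r := lt_of_le_of_ne (hφ0 r) (Ne.symm hzr)
      have hψr : ψ r = (deriv φ r)^2 / (4 * φ r) := by simp only [hψdef, if_neg hzr]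
      have hs : Real.sqrt (ψ r) = |deriv φ r| / (2 * Real.sqrt (φ r)) := by
        rw [hψr, Real.sqrt_div (sq_nonneg _), Real.sqrt_sq_eq_abs]
        congr 1
        rw [show (4:ℝ) * φ r = (2 * Real.sqrt (φ r))^2 by
          rw [mul_pow, Real.sq_sqrt (hφ0 r)]; norm_num]
        rw [Real.sqrt_sq (by positivity)]
      rw [hs]
      have hsp : 0 < Real.sqrt (φ r) := Real.sqrt_pos.2 hφr
      rw [mul_div_assoc']
      rw [le_div_iff₀ (by positivity)]
      ring_nf
      nlinarith [abs_nonneg (deriv φ r), hsp]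
  -- 1D Strauss estimate
  have hG : ∀ r : ℝ, 0 < r → r^2 * φ r ≤ A' + B' := by
    intro r hr
    exact OneD.strauss φ ψ hφd hφ0 hψ0 hd hAint hBint hr
  -- conclusion
  apply ae_of_all
  intro x hx
  have hxpos : (0:ℝ) < ‖x‖ := norm_pos_iff.2 hx
  have h1 : ‖x‖^2 * ‖u x‖^2 ≤ A' + B' := by
    rw [hradSq x]
    exact hG ‖x‖ hxpos
  have hH2 : (H1norm u)^2 = (∫ x, ‖u x‖^2) + ∫ x, gradSq u x := by
    rw [H1norm, Real.sq_sqrt]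
    exact add_nonneg (integral_nonneg fun x => sq_nonneg _)
      (integral_nonneg fun x => Strauss.gradSq_nonneg u x)
  have h2 : A' + B' ≤ κ⁻¹ * (H1norm u)^2 := by
    have hsum : κ * (A' + B') ≤ (∫ x, ‖u x‖^2) + ∫ x, gradSq u x := by
      rw [mul_add, hAval]
      exact add_le_add_right hBval _
    rw [hH2]
    rw [← mul_le_mul_iff_of_pos_left hκpos]
    calc κ * (A' + B') ≤ (∫ x, ‖u x‖^2) + ∫ x, gradSq u x := hsum
      _ = κ * (κ⁻¹ * ((∫ x, ‖u x‖^2) + ∫ x, gradSq u x)) := by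
          field_simp
  have hHnn : 0 ≤ H1norm u := Real.sqrt_nonneg _
  have h3 : (‖x‖ * ‖u x‖)^2 ≤ (Real.sqrt κ⁻¹ * H1norm u)^2 := by
    rw [mul_pow, mul_pow, Real.sq_sqrt (le_of_lt (by positivity : (0:ℝ) < κ⁻¹))]
    calc ‖x‖^2 * ‖u x‖^2 ≤ A' + B' := h1
      _ ≤ κ⁻¹ * (H1norm u)^2 := h2
  have h4 : ‖x‖ * ‖u x‖ ≤ Real.sqrt κ⁻¹ * H1norm u := by
    have := Real.sqrt_le_sqrt h3
    rwa [Real.sqrt_sq (by positivity), Real.sqrt_sq (by positivity)] at this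
  rw [le_div_iff₀ hxpos]
  calc ‖u x‖ * ‖x‖ = ‖x‖ * ‖u x‖ := by ring
    _ ≤ Real.sqrt κ⁻¹ * H1norm u := h4
end
end
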